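/- Let Σ be an alphabet and s ≥ 2. For 1 ≤ j ≤ s let τ_j ∈ Σ and ℓ_j ≥ 1, with τ_j ≠ τ_{j+1} for all 1 ≤ j < s and τ₁ ≠ τ_s, and let each index j carry a flag ε_j ∈ {exact, atLeast}. Define B_j = { τ_j^{ℓ_j} } if ε_j = exact and B_j = { τ_j^{e} : e ≥ ℓ_j } if ε_j = atLeast, and let L = B₁ · B₂ ⋯ B_s. Let T = σ₁^{m₁} σ₂^{m₂} ⋯ σ_r^{m_r} be a string given by its run-length encoding, i.e., r ≥ 1, m_i ≥ 1 for all i, and σ_i ≠ σ_{i+1} for all 1 ≤ i < r. Then T ∈ L⁺ if and only if s divides r and for every 0 ≤ j < r, writing j' = (j mod s) + 1: σ_{j+1} = τ_{j'}, and m_{j+1} = ℓ_{j'} if ε_{j'} = exact while m_{j+1} ≥ ℓ_{j'} if ε_{j'} = atLeast. (This is the run-length-encoding matching criterion for T against R_i⁺, for R_i of type ∘+ whose first and last characters are distinct, used in the | + ∘ + algorithm.) -/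

import Mathlib

open Computability

/-- `L⁺ := L · L∗`, the set of concatenations of one or more words of `L`. -/
def Language.plus {α : Type*} (L : Language α) : Language α := L * L∗

/-- The language of one run: if the flag is `true` ("exact"), exactly `ℓ` copies of `τ`;
if the flag is `false` ("atLeast"), at least `ℓ` copies of `τ`. -/
def runLang {α : Type*} (τ : α) (ℓ : ℕ) : Bool → Language α
  | true => {List.replicate ℓ τ}
  | false => {w | ∃ e, ℓ ≤ e ∧ w = List.replicate e τ}

/-!
A word has at most one run-length encoding. A word of `L⁺` made of `k` blocks of `L` is spelled
out by the `k * s` runs `τ_{i mod s}^{e_i}`, and these form a run-length encoding: every exponent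
is at least `ℓ ≥ 1`, consecutive characters inside a block differ, and across a block boundary
`τ_s ≠ τ_1`. Comparing it with the encoding of `T` forces `r = k * s` and the run-by-run
conditions; conversely, those conditions cut `T` into `r / s` blocks of `L`.
-/

section

variable {α : Type*}

def expandRuns (l : List (α × ℕ)) : List α := l.flatMap fun p => List.replicate p.2 p.1

def IsRunEncoding (l : List (α × ℕ)) : Prop :=
  (∀ p ∈ l, 0 < p.2) ∧ l.IsChain fun p q => p.1 ≠ q.1

@[simp] lemma expandRuns_cons (p : α × ℕ) (l : List (α × ℕ)) :
    expandRuns (p :: l) = List.replicate p.2 p.1 ++ expandRuns l :=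
  List.flatMap_cons ..

lemma expandRuns_ofFn {n : ℕ} (c : Fin n → α) (e : Fin n → ℕ) :
    expandRuns (List.ofFn fun i => (c i, e i)) =
      (List.ofFn fun i => List.replicate (e i) (c i)).flatten := by
  simp [expandRuns, List.flatMap_def, List.map_ofFn, Function.comp_def]

lemma isRunEncoding_ofFn {n : ℕ} {c : Fin n → α} {e : Fin n → ℕ} :
    IsRunEncoding (List.ofFn fun i => (c i, e i)) ↔
      (∀ i, 0 < e i) ∧ ∀ (i : ℕ) (h : i + 1 < n), c ⟨i, Nat.lt_of_succ_lt h⟩ ≠ c ⟨i + 1, h⟩ := by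
  simp [IsRunEncoding, List.isChain_ofFn]

lemma IsRunEncoding.of_cons {p : α × ℕ} {l : List (α × ℕ)} (h : IsRunEncoding (p :: l)) :
    IsRunEncoding l :=
  ⟨fun q hq => h.1 q (List.mem_cons_of_mem p hq), (List.isChain_cons.1 h.2).2⟩

lemma head?_expandRuns {l : List (α × ℕ)} (hl : ∀ p ∈ l, 0 < p.2) :
    (expandRuns l).head? = l.head?.map Prod.fst := by
  cases l with
  | nil => rfl
  | cons p l =>
    obtain ⟨n, hn⟩ := Nat.exists_eq_add_one_of_ne_zero (hl p List.mem_cons_self).ne'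
    simp [hn, List.replicate_succ]

lemma IsRunEncoding.head?_expandRuns_ne {a : α} {n : ℕ} {l : List (α × ℕ)}
    (h : IsRunEncoding ((a, n) :: l)) : (expandRuns l).head? ≠ some a := by
  rw [head?_expandRuns h.of_cons.1]
  intro hl
  obtain ⟨q, hq, hqa⟩ := Option.map_eq_some_iff.1 hl
  exact (List.isChain_cons.1 h.2).1 q hq hqa.symm

lemma List.replicate_append_cancel {a : α} {n k : ℕ} {u v : List α}
    (hu : u.head? ≠ some a) (hv : v.head? ≠ some a)
    (h : List.replicate n a ++ u = List.replicate k a ++ v) : n = k ∧ u = v := by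
  induction n generalizing k with
  | zero => cases k <;> simp_all [List.replicate_succ]
  | succ n ih =>
    cases k with
    | zero =>
      simp only [List.replicate_succ, List.replicate_zero, List.cons_append, List.nil_append] at h
      exact absurd (by rw [← h]; rfl) hv
    | succ k => simpa using ih (by simpa [List.replicate_succ] using h)

theorem expandRuns_injOn : Set.InjOn (expandRuns (α := α)) {l | IsRunEncoding l} := by
  intro l₁ h₁ l₂ h₂ h
  induction l₁ generalizing l₂
  all_goals
    have hhead := congrArg List.head? h
    rw [head?_expandRuns h₁.1, head?_expandRuns h₂.1] at hhead
  case nil => simpa [eq_comm, List.head?_eq_none_iff] using hhead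
  case cons p t₁ ih =>
    cases l₂ with
    | nil => simp at hhead
    | cons q t₂ =>
      obtain ⟨a, n⟩ := p
      obtain ⟨b, k⟩ := q
      obtain rfl : a = b := by simpa using hhead
      obtain ⟨rfl, ht⟩ := List.replicate_append_cancel h₁.head?_expandRuns_ne
        h₂.head?_expandRuns_ne (by simpa using h)
      rw [ih h₁.of_cons h₂.of_cons ht]

lemma List.flatten_ofFn_divNat_modNat {k s : ℕ} (W : Fin k → Fin s → List α) :
    (List.ofFn fun i : Fin (k * s) => W i.divNat i.modNat).flatten =
      (List.ofFn fun t => (List.ofFn (W t)).flatten).flatten := by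
  rw [List.ofFn_mul, List.flatten_flatten, List.map_ofFn]
  congr; funext t; congr; funext j
  suffices h : ∀ i : Fin (k * s), (i : ℕ) = t * s + j → W i.divNat i.modNat = W t j from h _ rfl
  intro i hi
  rw [show i = Fin.mkDivMod t j from Fin.ext (by simp [hi, Nat.mul_comm]),
    Fin.divNat_mkDivMod, Fin.modNat_mkDivMod]

namespace Language

lemma mem_plus_iff {L : Language α} {w : List α} :
    w ∈ L.plus ↔
      ∃ k, 0 < k ∧ ∃ ws : Fin k → List α, (∀ t, ws t ∈ L) ∧ w = (List.ofFn ws).flatten := by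
  have : w ∈ L.plus ↔ ∃ S : List (List α), S ≠ [] ∧ (∀ u ∈ S, u ∈ L) ∧ w = S.flatten := by
    rw [plus, mem_mul]
    constructor
    · rintro ⟨a, ha, b, hb, rfl⟩
      obtain ⟨S, rfl, hS⟩ := mem_kstar.1 hb
      exact ⟨a :: S, List.cons_ne_nil a S, List.forall_mem_cons.2 ⟨ha, hS⟩, rfl⟩
    · rintro ⟨_ | ⟨a, S⟩, hne, hS, rfl⟩
      · exact absurd rfl hne
      · rw [List.forall_mem_cons] at hS
        exact ⟨a, hS.1, _, join_mem_kstar hS.2, rfl⟩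
  simp [this, List.exists_iff_exists_tuple, Nat.pos_iff_ne_zero]

lemma mem_list_prod_ofFn {s : ℕ} {B : Fin s → Language α} {w : List α} :
    w ∈ (List.ofFn B).prod ↔
      ∃ ws : Fin s → List α, (∀ j, ws j ∈ B j) ∧ w = (List.ofFn ws).flatten := by
  induction s generalizing w with
  | zero => simp
  | succ s ih =>
    simp_rw [List.ofFn_succ, List.prod_cons, mem_mul, ih, Fin.exists_fin_succ_pi,
      Fin.forall_fin_succ, Fin.cons_zero, Fin.cons_succ, List.flatten_cons]
    grind

lemma mem_plus_list_prod_ofFn {s : ℕ} {B : Fin s → Language α} {w : List α} :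
    w ∈ (List.ofFn B).prod.plus ↔ ∃ k, 0 < k ∧ ∃ ws : Fin (k * s) → List α,
      (∀ i, ws i ∈ B i.modNat) ∧ w = (List.ofFn ws).flatten := by
  rw [mem_plus_iff]
  constructor
  · rintro ⟨k, hk, ws, hws, rfl⟩
    choose W hW hWws using fun t => mem_list_prod_ofFn.1 (hws t)
    refine ⟨k, hk, fun i => W i.divNat i.modNat, fun i => hW _ _, ?_⟩
    rw [List.flatten_ofFn_divNat_modNat]
    exact congrArg _ (List.ofFn_inj.2 (funext hWws))
  · rintro ⟨k, hk, ws, hws, rfl⟩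
    refine ⟨k, hk, fun t => (List.ofFn fun j => ws (Fin.mkDivMod t j)).flatten,
      fun t => mem_list_prod_ofFn.2 ⟨_, fun j => by simpa using hws (Fin.mkDivMod t j), rfl⟩, ?_⟩
    rw [← List.flatten_ofFn_divNat_modNat]
    simp

end Language

lemma mem_runLang_iff {τ : α} {ℓ : ℕ} {b : Bool} {w : List α} :
    w ∈ runLang τ ℓ b ↔ ∃ e, (if b then e = ℓ else ℓ ≤ e) ∧ w = List.replicate e τ := by
  cases b
  · exact Iff.rfl
  · exact Set.mem_singleton_iff.trans (by simp)

lemma mem_plus_list_prod_runLang_iff {s : ℕ} {τ : Fin s → α} {ℓ : Fin s → ℕ} {ε : Fin s → Bool}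
    {w : List α} :
    w ∈ (List.ofFn fun j => runLang (τ j) (ℓ j) (ε j)).prod.plus ↔
      ∃ k, 0 < k ∧ ∃ e : Fin (k * s) → ℕ,
        (∀ i, if ε i.modNat then e i = ℓ i.modNat else ℓ i.modNat ≤ e i) ∧
          w = (List.ofFn fun i => List.replicate (e i) (τ i.modNat)).flatten := by
  simp only [Language.mem_plus_list_prod_ofFn, mem_runLang_iff, Classical.skolem]
  constructor
  · rintro ⟨k, hk, ws, ⟨e, he⟩, rfl⟩
    exact ⟨k, hk, e, fun i => (he i).1, congrArg _ (List.ofFn_inj.2 (funext fun i => (he i).2))⟩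
  · rintro ⟨k, hk, e, he, rfl⟩
    exact ⟨k, hk, _, ⟨e, fun i => ⟨he i, rfl⟩⟩, rfl⟩

lemma apply_mod_ne_apply_succ_mod {s : ℕ} {f : Fin s → α} (hs : 0 < s)
    (hadj : ∀ (j : ℕ) (h : j + 1 < s), f ⟨j, Nat.lt_of_succ_lt h⟩ ≠ f ⟨j + 1, h⟩)
    (hends : f ⟨0, hs⟩ ≠ f ⟨s - 1, Nat.sub_lt hs Nat.one_pos⟩) (i : ℕ) :
    f ⟨i % s, Nat.mod_lt _ hs⟩ ≠ f ⟨(i + 1) % s, Nat.mod_lt _ hs⟩ := by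
  have hi := Nat.mod_lt i hs
  rcases Nat.lt_or_ge (i % s + 1) s with h | h
  · have hsucc : (i + 1) % s = i % s + 1 := by rw [← Nat.mod_add_mod, Nat.mod_eq_of_lt h]
    simpa only [hsucc] using hadj _ h
  · have hlast : i % s = s - 1 := by omega
    have hwrap : (i + 1) % s = 0 := by
      rw [← Nat.mod_add_mod, hlast, Nat.sub_add_cancel hs, Nat.mod_self]
    simpa only [hlast, hwrap] using hends.symm

end

theorem runLengthEncoding_matching_criterion {α : Type*} (s : ℕ) (hs : 2 ≤ s)
    (τ : Fin s → α) (ℓ : Fin s → ℕ) (hℓ : ∀ j, 1 ≤ ℓ j) (ε : Fin s → Bool)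
    (hτadj : ∀ (j : ℕ) (h : j + 1 < s), τ ⟨j, by omega⟩ ≠ τ ⟨j + 1, h⟩)
    (hτends : τ ⟨0, by omega⟩ ≠ τ ⟨s - 1, by omega⟩)
    (r : ℕ) (hr : 1 ≤ r) (σ : Fin r → α) (m : Fin r → ℕ) (hm : ∀ i, 1 ≤ m i)
    (hσadj : ∀ (i : ℕ) (h : i + 1 < r), σ ⟨i, by omega⟩ ≠ σ ⟨i + 1, h⟩) :
    (List.ofFn fun i : Fin r => List.replicate (m i) (σ i)).flatten ∈
        Language.plus ((List.ofFn fun j : Fin s => runLang (τ j) (ℓ j) (ε j)).prod) ↔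
      s ∣ r ∧
        ∀ i : Fin r,
          σ i = τ ⟨(i : ℕ) % s, Nat.mod_lt _ (by omega)⟩ ∧
            (if ε ⟨(i : ℕ) % s, Nat.mod_lt _ (by omega)⟩ then
              m i = ℓ ⟨(i : ℕ) % s, Nat.mod_lt _ (by omega)⟩
            else
              ℓ ⟨(i : ℕ) % s, Nat.mod_lt _ (by omega)⟩ ≤ m i) := by
  have hτcyc := apply_mod_ne_apply_succ_mod (by omega) hτadj hτends
  rw [mem_plus_list_prod_runLang_iff]
  constructor
  · rintro ⟨k, -, e, he, hw⟩
    have he_pos : ∀ i, 0 < e i := fun i =>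
      lt_of_lt_of_le (hℓ i.modNat) (by have := he i; split_ifs at this <;> omega)
    rw [← expandRuns_ofFn, ← expandRuns_ofFn] at hw
    have hruns := expandRuns_injOn (isRunEncoding_ofFn.2 ⟨hm, hσadj⟩)
      (isRunEncoding_ofFn.2 ⟨he_pos, fun i _ => hτcyc i⟩) hw
    obtain ⟨rfl, hσm⟩ := Sigma.mk.inj (List.ofFn_inj'.1 hruns)
    refine ⟨Dvd.intro_left k rfl, fun i => ?_⟩
    obtain ⟨hσ, hmi⟩ := Prod.mk.inj (congrFun (eq_of_heq hσm) i)
    exact ⟨hσ, hmi ▸ he i⟩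
  · rintro ⟨⟨k, hk⟩, hmatch⟩
    rw [mul_comm] at hk
    subst hk
    refine ⟨k, Nat.pos_of_mul_pos_right hr, m, fun i => (hmatch i).2, ?_⟩
    exact congrArg _ (List.ofFn_inj.2 (funext fun i => by rw [(hmatch i).1]; rfl))
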